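/- Let G be a finite abelian group, let k be a positive natural number, and let S₁, …, S_k be subgroups of G with γ_i = |S_i| satisfying 2 ≤ γ_i ≤ 4 for all i. Suppose the multiplication map S₁ × ⋯ × S_k → G sending (s₁, …, s_k) to s₁·⋯·s_k is bijective. Let T be a positive natural number and for each i set θ_i = π/(4T) if γ_i = 2, θ_i = π/(3T) if γ_i = 3, and θ_i = π/(2T) if γ_i = 4. For each i let A_i be the Cayley adjacency matrix of Cay(G, S_i∖{id}) over ℂ, let H_i = (2/γ_i)·A_i + ((2 − γ_i)/γ_i)·I, and define U = ∏_{i=1}^k exp(i·θ_i·H_i) (matrix exponential, i the imaginary unit). Then every entry of U^T has absolute value 1/√|G|; that is, the staggered quantum walk admits instantaneous uniform mixing at time T. -/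

import Mathlib

open scoped Classical

/-- The Cayley adjacency matrix of `Cay(G, S \ {id})`: entry `(g, h)` is `1` if
`g * h⁻¹ ∈ S` and `g ≠ h`, and `0` otherwise. -/
noncomputable def cayleyAdj {G : Type*} [Group G] (S : Subgroup G) : Matrix G G ℂ :=
  Matrix.of fun g h => if g * h⁻¹ ∈ S ∧ g ≠ h then (1 : ℂ) else 0

/-!
With `J_S` the matrix of the relation `g * h⁻¹ ∈ S`, the staggered Hamiltonian is `2 • P - 1`
for the idempotent `P = |S|⁻¹ • J_S`, so `exp (i α H_S) = e^{-iα} • 1 + (e^{iα} - e^{-iα}) • P`.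
All matrices involved are group circulants `(g, h) ↦ f (g * h⁻¹)`, which commute and multiply
by convolution, so `U ^ T` is the circulant of the convolution of the symbols of the factors at
the angles `α_i = T θ_i`, the `i`-th symbol being supported on `S_i`. As every element of `G`
factors uniquely as `s₁ ⋯ s_k`, each entry of `U ^ T` is a single product `∏ f_i (s_i)`, and the
angles are chosen so that `4 sin² α_i = |S_i|`, which makes `|f_i (s)| = |S_i|^{-1/2}` on `S_i`.
-/

open NormedSpace
open Complex (I)

theorem NormedSpace.exp_smul_of_isIdempotentElem {𝕂 𝔸 : Type*} [RCLike 𝕂] [NormedRing 𝔸]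
    [NormedAlgebra 𝕂 𝔸] [CompleteSpace 𝔸] {P : 𝔸} (hP : IsIdempotentElem P) (c : 𝕂) :
    exp (c • P) = exp c • P + (1 - P) := by
  refine (exp_series_hasSum_exp' (𝕂 := 𝕂) (c • P)).unique ?_
  convert ((exp_series_hasSum_exp' (𝕂 := 𝕂) c).smul_const P).add (hasSum_ite_eq 0 (1 - P))
    using 2 with n
  rcases n with _ | n
  · simp
  · simp [smul_pow, hP.pow_succ_eq, smul_smul]

theorem Matrix.exp_smul_of_isIdempotentElem {n 𝕂 : Type*} [Fintype n] [DecidableEq n] [RCLike 𝕂]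
    {P : Matrix n n 𝕂} (hP : IsIdempotentElem P) (c : 𝕂) :
    exp (c • P) = exp c • P + (1 - P) :=
  open scoped Norms.Operator in NormedSpace.exp_smul_of_isIdempotentElem hP c

theorem List.prod_ofFn_pow {M : Type*} [Monoid M] {k : ℕ} (f : Fin k → M)
    (hf : ∀ i j, Commute (f i) (f j)) (n : ℕ) :
    (List.ofFn f).prod ^ n = (List.ofFn fun i => f i ^ n).prod := by
  induction k with
  | zero => simp
  | succ k ih =>
    have hcomm : Commute (f 0) (List.ofFn fun i => f i.succ).prod :=
      Commute.list_prod_right _ _ fun _ hx => by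
        obtain ⟨i, rfl⟩ := List.mem_ofFn.mp hx
        exact hf 0 i.succ
    rw [List.ofFn_succ, List.prod_cons, hcomm.mul_pow, ih _ fun i j => hf i.succ j.succ,
      List.ofFn_succ, List.prod_cons]

namespace Matrix

variable {G R : Type*}

def mulCirculant [Group G] (f : G → R) : Matrix G G R := of fun g h => f (g * h⁻¹)

@[simp]
theorem mulCirculant_apply [Group G] (f : G → R) (g h : G) : mulCirculant f g h = f (g * h⁻¹) := rfl

theorem mulCirculant_mul [Group G] [Fintype G] [Semiring R] (f f' : G → R) :
    mulCirculant f * mulCirculant f' = mulCirculant fun x => ∑ p, f p * f' (p⁻¹ * x) := by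
  ext a b
  refine Fintype.sum_equiv ((Equiv.inv G).trans (Equiv.mulLeft a)) _ _ fun m => ?_
  simp [mul_assoc]

theorem mulCirculant_single_one [Group G] [Semiring R] :
    mulCirculant (Pi.single 1 1 : G → R) = 1 := by
  ext a b
  simp [Pi.single_apply, one_apply, mul_inv_eq_one]

theorem mulCirculant_commute [CommGroup G] [Fintype G] [CommSemiring R] (f f' : G → R) :
    Commute (mulCirculant f) (mulCirculant f') := by
  rw [Commute, SemiconjBy, mulCirculant_mul, mulCirculant_mul]
  congr 1
  funext x
  refine Fintype.sum_equiv ((Equiv.inv G).trans (Equiv.mulRight x)) _ _ fun p => ?_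
  simp [mul_comm]

theorem list_prod_ofFn_mulCirculant [CommGroup G] [Fintype G] [CommSemiring R] {k : ℕ}
    (f : Fin k → G → R) :
    (List.ofFn fun i => mulCirculant (f i)).prod =
      mulCirculant fun x => ∑ y : Fin k → G, if ∏ i, y i = x then ∏ i, f i (y i) else 0 := by
  induction k with
  | zero =>
    rw [List.ofFn_zero, List.prod_nil, ← mulCirculant_single_one]
    congr 1
    funext x
    simp [Pi.single_apply, eq_comm]
  | succ k ih =>
    rw [List.ofFn_succ, List.prod_cons, ih, mulCirculant_mul]
    congr 1
    funext x
    simp_rw [Finset.mul_sum, mul_ite, mul_zero, eq_inv_mul_iff_mul_eq]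
    rw [← Fintype.sum_prod_type']
    refine Fintype.sum_equiv (Fin.consEquiv fun _ => G) _ _ fun py => ?_
    simp [Fin.prod_univ_succ, Fin.consEquiv]

theorem mulCirculant_indicator_mul_self [Group G] [Fintype G] [Semiring R] (S : Subgroup G) :
    mulCirculant ((S : Set G).indicator (1 : G → R)) * mulCirculant ((S : Set G).indicator 1) =
      (Nat.card S : R) • mulCirculant ((S : Set G).indicator 1) := by
  rw [mulCirculant_mul]
  ext a b
  have key : ∀ p x : G, (S : Set G).indicator (1 : G → R) p * (S : Set G).indicator 1 (p⁻¹ * x) =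
      (S : Set G).indicator 1 p * (S : Set G).indicator 1 x := by
    intro p x
    by_cases hp : p ∈ S
    · simp [Set.indicator_apply, S.mul_mem_cancel_left (S.inv_mem hp)]
    · simp [hp]
  simp only [mulCirculant_apply, key, ← Finset.sum_mul, smul_apply, smul_eq_mul]
  simp [Set.indicator_apply, Finset.sum_boole, Nat.card_eq_fintype_card, Fintype.card_subtype]

end Matrix

open Matrix

theorem sum_ite_prod_eq_of_injective_prod {ι G R : Type*} [Fintype ι] [DecidableEq ι]
    [CommGroup G] [Fintype G] [CommSemiring R] {S : ι → Subgroup G}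
    (hinj : Function.Injective fun x : (i : ι) → S i => ∏ i, (x i : G))
    (f : ι → G → R) (hf : ∀ i, ∀ x ∉ S i, f i x = 0) (σ : (i : ι) → S i) :
    (∑ y : ι → G, if ∏ i, y i = ∏ i, (σ i : G) then ∏ i, f i (y i) else 0) =
      ∏ i, f i (σ i) := by
  refine (Finset.sum_eq_single (fun i => (σ i : G)) (fun y _ hyσ => ?_) (by simp)).trans
    (if_pos rfl)
  split_ifs with hprod
  · by_cases hy : ∀ i, y i ∈ S i
    · exact absurd (funext fun i => congrArg Subtype.val (congrFun
        (hinj (a₁ := fun i => ⟨y i, hy i⟩) hprod) i)) hyσ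
    · obtain ⟨i, hi⟩ := not_forall.mp hy
      exact Finset.prod_eq_zero (Finset.mem_univ i) (hf i _ hi)
  · rfl

section Staggered

variable {G : Type*} [CommGroup G]

theorem cayleyAdj_eq_mulCirculant_sub_one (S : Subgroup G) :
    cayleyAdj S = mulCirculant ((S : Set G).indicator 1) - 1 := by
  ext g h
  by_cases hgh : g = h
  · simp [cayleyAdj, hgh]
  · simp [cayleyAdj, hgh, Set.indicator_apply, one_apply]

noncomputable def staggeredHamiltonian (S : Subgroup G) : Matrix G G ℂ :=
  ((2 : ℂ) / Nat.card S) • cayleyAdj S + ((2 - Nat.card S) / Nat.card S : ℂ) • 1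

noncomputable def staggeredSymbol (S : Subgroup G) (α : ℝ) : G → ℂ := fun x =>
  Complex.exp (-(α * I)) * (Pi.single 1 1 : G → ℂ) x +
    (Complex.exp (α * I) - Complex.exp (-(α * I))) / Nat.card S * (S : Set G).indicator 1 x

theorem staggeredSymbol_eq_zero_of_notMem {S : Subgroup G} (α : ℝ) {x : G} (hx : x ∉ S) :
    staggeredSymbol S α x = 0 := by
  have hx1 : x ≠ 1 := fun h => hx (h ▸ S.one_mem)
  simp [staggeredSymbol, hx, hx1]

theorem exp_smul_staggeredHamiltonian [Fintype G] (S : Subgroup G) (α : ℝ) :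
    exp ((I * α) • staggeredHamiltonian S) = mulCirculant (staggeredSymbol S α) := by
  set γ : ℂ := (Nat.card S : ℂ)
  have hγ : γ ≠ 0 := Nat.cast_ne_zero.mpr Nat.card_pos.ne'
  set P := γ⁻¹ • mulCirculant ((S : Set G).indicator (1 : G → ℂ))
  have hP : IsIdempotentElem P := by
    rw [IsIdempotentElem, smul_mul_smul, mulCirculant_indicator_mul_self, smul_smul,
      mul_assoc, inv_mul_cancel₀ hγ, mul_one]
  have hH : (I * α) • staggeredHamiltonian S = (2 * (α * I)) • P + (-(α * I)) • 1 := by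
    rw [staggeredHamiltonian, cayleyAdj_eq_mulCirculant_sub_one]
    simp only [P, smul_sub, smul_smul]
    match_scalars <;> field_simp <;> ring
  rw [hH, Matrix.exp_add_of_commute _ _ ((Commute.one_right _).smul_right _),
    Matrix.exp_smul_of_isIdempotentElem hP,
    Matrix.exp_smul_of_isIdempotentElem IsIdempotentElem.one, ← Complex.exp_eq_exp_ℂ, sub_self,
    add_zero]
  have hexp : Complex.exp (2 * (α * I)) * Complex.exp (-(α * I)) = Complex.exp (α * I) := by
    rw [← Complex.exp_add]; ring_nf
  ext g h
  simp only [P, staggeredSymbol, Matrix.mul_smul, Matrix.mul_one, add_mul, sub_mul, one_mul,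
    Matrix.add_apply, Matrix.sub_apply, Matrix.smul_apply, one_apply, mulCirculant_apply,
    Pi.single_apply, mul_inv_eq_one, smul_eq_mul]
  linear_combination (γ⁻¹ * (S : Set G).indicator 1 (g * h⁻¹)) * hexp

theorem exp_smul_staggeredHamiltonian_pow [Fintype G] (S : Subgroup G) (θ : ℝ) (n : ℕ) :
    exp ((I * θ) • staggeredHamiltonian S) ^ n = mulCirculant (staggeredSymbol S (n * θ)) := by
  rw [← Matrix.exp_nsmul, ← Nat.cast_smul_eq_nsmul ℂ, smul_smul, ← exp_smul_staggeredHamiltonian]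
  push_cast
  ring_nf

theorem norm_staggeredSymbol_of_mem [Finite G] {S : Subgroup G} {α : ℝ}
    (hα : 4 * Real.sin α ^ 2 = Nat.card S) {x : G} (hx : x ∈ S) :
    ‖staggeredSymbol S α x‖ = (√(Nat.card S))⁻¹ := by
  have hγ : (Nat.card S : ℝ) ≠ 0 := Nat.cast_ne_zero.mpr Nat.card_pos.ne'
  have hexp : ∀ β : ℝ, Complex.exp (β * I) = (Real.cos β : ℂ) + (Real.sin β : ℂ) * I := fun β => by
    rw [Complex.exp_mul_I, ← Complex.ofReal_cos, ← Complex.ofReal_sin]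
  rw [← Real.sqrt_inv, staggeredSymbol, Set.indicator_of_mem hx, Pi.one_apply, ← neg_mul,
    ← Complex.ofReal_neg, hexp, hexp, Real.cos_neg, Real.sin_neg, Pi.single_apply]
  split_ifs
  · convert Complex.norm_add_mul_I (Real.cos α) ((2 / Nat.card S - 1) * Real.sin α) using 2
    · push_cast; ring
    · rw [Real.cos_sq']; field_simp; linear_combination (Nat.card S - 1 : ℝ) * hα
  · convert Complex.norm_add_mul_I 0 (2 / Nat.card S * Real.sin α) using 2
    · push_cast; ring
    · field_simp; linear_combination -hα

end Staggered

open Real in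
theorem four_mul_sin_sq_eq_of_staggered_angle {γ : ℕ} {T θ : ℝ} (hT : T ≠ 0) (h2 : 2 ≤ γ)
    (h4 : γ ≤ 4) (hθ2 : γ = 2 → θ = π / (4 * T)) (hθ3 : γ = 3 → θ = π / (3 * T))
    (hθ4 : γ = 4 → θ = π / (2 * T)) :
    4 * sin (T * θ) ^ 2 = γ := by
  have hcancel : ∀ c : ℝ, T * (π / (c * T)) = π / c := fun c => by
    rw [mul_div_assoc', mul_comm T, mul_div_mul_right _ _ hT]
  interval_cases γ
  · rw [hθ2 rfl, hcancel, sin_pi_div_four, div_pow, sq_sqrt zero_le_two]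
    norm_num
  · rw [hθ3 rfl, hcancel, sin_pi_div_three, div_pow, sq_sqrt zero_le_three]
    norm_num
  · rw [hθ4 rfl, hcancel, sin_pi_div_two]
    norm_num

theorem staggered_cayley_instantaneous_uniform_mixing_general
    {G : Type*} [CommGroup G] [Fintype G]
    (k : ℕ) (S : Fin k → Subgroup G)
    (γ : Fin k → ℕ) (hγ : ∀ i, γ i = Nat.card (S i))
    (hγ2 : ∀ i, 2 ≤ γ i) (hγ4 : ∀ i, γ i ≤ 4)
    (hbij : Function.Bijective
      (fun x : (i : Fin k) → (S i : Subgroup G) => ∏ i, (x i : G)))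
    (T : ℕ) (hT : 0 < T)
    (θ : Fin k → ℝ)
    (hθ2 : ∀ i, γ i = 2 → θ i = Real.pi / (4 * T))
    (hθ3 : ∀ i, γ i = 3 → θ i = Real.pi / (3 * T))
    (hθ4 : ∀ i, γ i = 4 → θ i = Real.pi / (2 * T))
    (A : Fin k → Matrix G G ℂ) (hA : ∀ i, A i = cayleyAdj (S i))
    (H : Fin k → Matrix G G ℂ)
    (hH : ∀ i, H i = ((2 : ℂ) / (γ i : ℂ)) • A i
        + (((2 : ℂ) - (γ i : ℂ)) / (γ i : ℂ)) • (1 : Matrix G G ℂ))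
    (U : Matrix G G ℂ)
    (hU : U = (List.ofFn fun i => NormedSpace.exp ((Complex.I * (θ i : ℂ)) • H i)).prod) :
    ∀ g h : G, ‖(U ^ T) g h‖ = 1 / Real.sqrt (Fintype.card G) := by
  intro g h
  have hHS : ∀ i, H i = staggeredHamiltonian (S i) := fun i => by rw [hH, hA, hγ]; rfl
  have hcomm : ∀ i j, Commute (exp ((I * θ i) • H i)) (exp ((I * θ j) • H j)) := fun i j => by
    simp only [hHS, exp_smul_staggeredHamiltonian]
    exact mulCirculant_commute _ _
  obtain ⟨σ, hσ⟩ := hbij.surjective (g * h⁻¹)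
  have hentry : (U ^ T) g h = ∏ i, staggeredSymbol (S i) (T * θ i) (σ i) := by
    rw [hU, List.prod_ofFn_pow _ hcomm]
    simp only [hHS, exp_smul_staggeredHamiltonian_pow]
    rw [list_prod_ofFn_mulCirculant, mulCirculant_apply, ← hσ]
    exact sum_ite_prod_eq_of_injective_prod hbij.injective
      (fun i => staggeredSymbol (S i) (T * θ i)) (fun i _ => staggeredSymbol_eq_zero_of_notMem _) σ
  have hα : ∀ i, 4 * Real.sin (T * θ i) ^ 2 = Nat.card (S i) := fun i => by
    rw [← hγ]
    exact four_mul_sin_sq_eq_of_staggered_angle (Nat.cast_pos.mpr hT).ne' (hγ2 i) (hγ4 i)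
      (hθ2 i) (hθ3 i) (hθ4 i)
  have hcard : (Fintype.card G : ℝ) = ∏ i, (Nat.card (S i) : ℝ) := by
    rw [← Nat.card_eq_fintype_card, ← Nat.card_eq_of_bijective _ hbij, Nat.card_pi, Nat.cast_prod]
  rw [hentry, norm_prod,
    Finset.prod_congr rfl fun i _ => norm_staggeredSymbol_of_mem (hα i) (σ i).2, hcard,
    Real.sqrt_prod _ fun i _ => Nat.cast_nonneg _, Finset.prod_inv_distrib, one_div]

theorem staggered_cayley_instantaneous_uniform_mixing
    {G : Type*} [CommGroup G] [Fintype G]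
    (k : ℕ) (hk : 0 < k) (S : Fin k → Subgroup G)
    (γ : Fin k → ℕ) (hγ : ∀ i, γ i = Nat.card (S i))
    (hγ2 : ∀ i, 2 ≤ γ i) (hγ4 : ∀ i, γ i ≤ 4)
    (hbij : Function.Bijective
      (fun x : (i : Fin k) → (S i : Subgroup G) => ∏ i, (x i : G)))
    (T : ℕ) (hT : 0 < T)
    (θ : Fin k → ℝ)
    (hθ2 : ∀ i, γ i = 2 → θ i = Real.pi / (4 * T))
    (hθ3 : ∀ i, γ i = 3 → θ i = Real.pi / (3 * T))
    (hθ4 : ∀ i, γ i = 4 → θ i = Real.pi / (2 * T))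
    (A : Fin k → Matrix G G ℂ) (hA : ∀ i, A i = cayleyAdj (S i))
    (H : Fin k → Matrix G G ℂ)
    (hH : ∀ i, H i = ((2 : ℂ) / (γ i : ℂ)) • A i
        + (((2 : ℂ) - (γ i : ℂ)) / (γ i : ℂ)) • (1 : Matrix G G ℂ))
    (U : Matrix G G ℂ)
    (hU : U = (List.ofFn fun i => NormedSpace.exp ((Complex.I * (θ i : ℂ)) • H i)).prod) :
    ∀ g h : G, ‖(U ^ T) g h‖ = 1 / Real.sqrt (Fintype.card G) :=
  staggered_cayley_instantaneous_uniform_mixing_general k S γ hγ hγ2 hγ4 hbij T hT θ hθ2 hθ3 hθ4 A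
    hA H hH U hU
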